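/- Let f : X → ℝ be bounded and C-Lipschitz for some C > 0. Then for every s ∈ ℝ, the Fisher information of e^{sf} satisfies I(e^{sf}) ≤ C²·s²·∑_{x} e^{s f(x)} π(x). -/

import Mathlib

open Real Filter MeasureTheory Set

/-- `M₁(x) = ∑_{y ≠ x} k(x,y)`. -/
noncomputable def M1fn {X : Type*} (k : X → X → ℝ) (x : X) : ℝ :=
  ∑' y : {y : X // y ≠ x}, k x y

/-- The standing assumptions on the transition rates and the invariant probability
measure: nonnegative off-diagonal rates, summable rows, `k(x,x) = -M₁(x)`,
a strictly positive probability density and detailed balance. -/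
def MarkovSetting {X : Type*} (k : X → X → ℝ) (μ : X → ℝ) : Prop :=
  (∀ x y, x ≠ y → 0 ≤ k x y) ∧
  (∀ x : X, Summable fun y : {y : X // y ≠ x} => k x y) ∧
  (∀ x : X, k x x = -M1fn k x) ∧
  (∀ x, 0 < μ x) ∧ (∑' x, μ x) = 1 ∧
  (∀ x y, μ x * k x y = μ y * k y x)

/-- The entropy `Ent_μ(f)`. -/
noncomputable def entFn {X : Type*} (μ f : X → ℝ) : ℝ :=
  (∑' x, f x * Real.log (f x) * μ x) -
    (∑' x, f x * μ x) * Real.log (∑' x, f x * μ x)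

/-- The Fisher information `I(f) = (1/2) ∑_{x,y} k(x,y)(f(y)-f(x))(log f(y)-log f(x)) μ(x)`. -/
noncomputable def fisherFn {X : Type*} (k : X → X → ℝ) (μ f : X → ℝ) : ℝ :=
  (1/2) * ∑' p : X × X,
    k p.1 p.2 * (f p.2 - f p.1) * (Real.log (f p.2) - Real.log (f p.1)) * μ p.1

/-- Finiteness of the Fisher information. -/
def FisherFinite {X : Type*} (k : X → X → ℝ) (μ f : X → ℝ) : Prop :=
  Summable fun p : X × X =>
    k p.1 p.2 * (f p.2 - f p.1) * (Real.log (f p.2) - Real.log (f p.1)) * μ p.1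

/-- A growth function: strictly increasing, concave, `C¹` and positive on `(0,∞)`. -/
def GrowthFun (Φ : ℝ → ℝ) : Prop :=
  StrictMonoOn Φ (Ioi 0) ∧ ConcaveOn ℝ (Ioi 0) Φ ∧
    ContDiffOn ℝ 1 Φ (Ioi 0) ∧ ∀ r : ℝ, 0 < r → 0 < Φ r

/-- The entropy-information inequality `EI(Φ)`:
`Ent_μ(f) ≤ Φ(I(f))` for all probability densities `f ∈ P_*(X)` with finite entropy
and finite Fisher information. -/
def EIineq {X : Type*} (k : X → X → ℝ) (μ : X → ℝ) (Φ : ℝ → ℝ) : Prop :=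
  ∀ f : X → ℝ, (∀ x, 0 < f x) → (∑' x, f x * μ x) = 1 →
    (Summable fun x => f x * Real.log (f x) * μ x) →
    FisherFinite k μ f →
    entFn μ f ≤ Φ (fisherFn k μ f)

/-- `Γ(f)(x) = (1/2) ∑_y k(x,y)(f(y)-f(x))²`. -/
noncomputable def gammaFn {X : Type*} (k : X → X → ℝ) (f : X → ℝ) (x : X) : ℝ :=
  (1/2) * ∑' y, k x y * (f y - f x) ^ 2

/-- `f` is `C`-Lipschitz: `Γ(f)(x)` exists (finitely) at every point and `Γ(f) ≤ C²`. -/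
def LipBound {X : Type*} (k : X → X → ℝ) (f : X → ℝ) (C : ℝ) : Prop :=
  (∀ x : X, Summable fun y => k x y * (f y - f x) ^ 2) ∧
    ∀ x : X, gammaFn k f x ≤ C ^ 2

open scoped ENNReal

/-- The Fisher information as an extended nonnegative real (all summands are
nonnegative, so this is the honest value in `[0,∞]`). -/
noncomputable def fisherE {X : Type*} (k : X → X → ℝ) (μ f : X → ℝ) : ℝ≥0∞ :=
  (1/2 : ℝ≥0∞) * ∑' p : X × X, ENNReal.ofReal
    (k p.1 p.2 * (f p.2 - f p.1) * (Real.log (f p.2) - Real.log (f p.1)) * μ p.1)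

/-!
Writing `g = e^{sf}`, the Fisher summand is `k(x,y) (g(y) - g(x)) (s f(y) - s f(x)) π(x)`.
The elementary inequality `(e^a - e^b)(a - b) ≤ (a - b)² (e^a + e^b) / 2` bounds it by
`s² (f(y) - f(x))² k(x,y) π(x) (g(x) + g(y)) / 2`, and detailed balance moves the `g(y)` half to
the pair `(y, x)`. Summing over `y` produces `s² g(x) π(x) Γ(f)(x) ≤ C² s² g(x) π(x)`.
-/

namespace Real

lemma mul_exp_sub_one_le (t : ℝ) : t * (exp t - 1) ≤ t ^ 2 * (exp t + 1) / 2 := by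
  set φ : ℝ → ℝ := fun u => u * (exp u + 1) - 2 * (exp u - 1)
  have hφ : ∀ u, HasDerivAt φ (exp u * (u - 1) + 1) u := fun u => by
    have := (((hasDerivAt_id u).mul ((hasDerivAt_exp u).add_const 1)).sub
      (((hasDerivAt_exp u).sub_const 1).const_mul 2))
    exact this.congr_deriv (by simp only [id]; ring)
  have hφ_mono : Monotone φ := by
    refine monotone_of_deriv_nonneg (fun u => (hφ u).differentiableAt) fun u => ?_
    rw [(hφ u).deriv]
    -- `e^u (u - 1) + 1 ≥ 0` is `1 - u ≤ e^{-u}` multiplied by `e^u`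
    have h := mul_le_mul_of_nonneg_left (add_one_le_exp (-u)) (exp_pos u).le
    rw [← exp_add, add_neg_cancel, exp_zero] at h
    linarith
  have hφ0 : φ 0 = 0 := by simp [φ]
  have hsign : 0 ≤ t * φ t := by
    rcases le_total 0 t with ht | ht
    · exact mul_nonneg ht (hφ0 ▸ hφ_mono ht)
    · exact mul_nonneg_of_nonpos_of_nonpos ht (hφ0 ▸ hφ_mono ht)
  nlinarith [hsign]

lemma exp_sub_exp_mul_sub_le (a b : ℝ) :
    (exp a - exp b) * (a - b) ≤ (a - b) ^ 2 * (exp a + exp b) / 2 := by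
  have h := mul_le_mul_of_nonneg_left (mul_exp_sub_one_le (a - b)) (exp_pos b).le
  have ha : exp a = exp b * exp (a - b) := by rw [← exp_add, add_sub_cancel]
  rw [ha]
  linarith

end Real

section MarkovSetting

variable {X : Type*} {k : X → X → ℝ} {μ : X → ℝ}

lemma gamma_summand_nonneg (hk : ∀ x y, x ≠ y → 0 ≤ k x y) (f : X → ℝ) (x y : X) :
    0 ≤ k x y * (f y - f x) ^ 2 / 2 := by
  rcases eq_or_ne x y with rfl | hxy
  · simp
  · have := hk x y hxy
    positivity

lemma ofReal_gammaFn (hk : ∀ x y, x ≠ y → 0 ≤ k x y) {f : X → ℝ} {x : X}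
    (hf : Summable fun y => k x y * (f y - f x) ^ 2) :
    ENNReal.ofReal (gammaFn k f x) = ∑' y, ENNReal.ofReal (k x y * (f y - f x) ^ 2 / 2) := by
  rw [← ENNReal.ofReal_tsum_of_nonneg (gamma_summand_nonneg hk f x) (hf.div_const 2),
    gammaFn, tsum_div_const, one_div_mul_eq_div]

lemma summable_exp_mul_of_bounded (hμ : Summable μ) (hμ_nonneg : ∀ x, 0 ≤ μ x) {f : X → ℝ}
    (hf : ∃ B, ∀ x, |f x| ≤ B) (s : ℝ) : Summable fun x => Real.exp (s * f x) * μ x := by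
  obtain ⟨B, hB⟩ := hf
  refine (hμ.mul_left (Real.exp (|s| * B))).of_nonneg_of_le
    (fun x => mul_nonneg (Real.exp_pos _).le (hμ_nonneg x)) fun x => ?_
  have hsf : s * f x ≤ |s| * B :=
    (le_abs_self _).trans ((abs_mul s (f x)).trans_le
      (mul_le_mul_of_nonneg_left (hB x) (abs_nonneg s)))
  exact mul_le_mul_of_nonneg_right (Real.exp_le_exp.2 hsf) (hμ_nonneg x)

variable (k μ) in
/-- The `(x, y)` contribution to `s² ∑ₓ e^{s f(x)} π(x) Γ(f)(x)`. -/
noncomputable def expWeightedGammaTerm (f : X → ℝ) (s : ℝ) (p : X × X) : ℝ≥0∞ :=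
  ENNReal.ofReal (s ^ 2 * Real.exp (s * f p.1) * μ p.1) *
    ENNReal.ofReal (k p.1 p.2 * (f p.2 - f p.1) ^ 2 / 2)

lemma fisher_exp_summand_le (hk : ∀ x y, x ≠ y → 0 ≤ k x y) (hμ_nonneg : ∀ x, 0 ≤ μ x)
    (hdb : ∀ x y, μ x * k x y = μ y * k y x) (f : X → ℝ) (s : ℝ) (p : X × X) :
    ENNReal.ofReal (k p.1 p.2 * (Real.exp (s * f p.2) - Real.exp (s * f p.1)) *
        (Real.log (Real.exp (s * f p.2)) - Real.log (Real.exp (s * f p.1))) * μ p.1) ≤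
      expWeightedGammaTerm k μ f s p + expWeightedGammaTerm k μ f s p.swap := by
  obtain ⟨x, y⟩ := p
  rcases eq_or_ne x y with rfl | hxy
  · simp
  have hw : ∀ z, 0 ≤ s ^ 2 * Real.exp (s * f z) * μ z := fun z =>
    mul_nonneg (mul_nonneg (sq_nonneg s) (Real.exp_pos _).le) (hμ_nonneg z)
  simp only [Real.log_exp, expWeightedGammaTerm, Prod.swap_prod_mk]
  rw [← ENNReal.ofReal_mul (hw x), ← ENNReal.ofReal_mul (hw y)]
  refine (ENNReal.ofReal_le_ofReal ?_).trans ENNReal.ofReal_add_le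
  have h := mul_le_mul_of_nonneg_left (Real.exp_sub_exp_mul_sub_le (s * f y) (s * f x))
    (mul_nonneg (hk x y hxy) (hμ_nonneg x))
  linear_combination h + (s ^ 2 * (f y - f x) ^ 2 / 2 * Real.exp (s * f y)) * hdb x y

lemma fisherE_exp_le_tsum (hk : ∀ x y, x ≠ y → 0 ≤ k x y) (hμ_nonneg : ∀ x, 0 ≤ μ x)
    (hdb : ∀ x y, μ x * k x y = μ y * k y x) (f : X → ℝ) (s : ℝ) :
    fisherE k μ (fun x => Real.exp (s * f x)) ≤ ∑' p, expWeightedGammaTerm k μ f s p := by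
  have hswap : ∑' p : X × X, expWeightedGammaTerm k μ f s p.swap =
      ∑' p, expWeightedGammaTerm k μ f s p :=
    (Equiv.prodComm X X).tsum_eq _
  calc fisherE k μ (fun x => Real.exp (s * f x))
      ≤ 1 / 2 * ∑' p, (expWeightedGammaTerm k μ f s p + expWeightedGammaTerm k μ f s p.swap) :=
        mul_le_mul_right (ENNReal.tsum_le_tsum (fisher_exp_summand_le hk hμ_nonneg hdb f s)) _
    _ = ∑' p, expWeightedGammaTerm k μ f s p := by
        rw [ENNReal.tsum_add, hswap, ← two_mul, ← mul_assoc, one_div,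
          ENNReal.inv_mul_cancel two_ne_zero ENNReal.ofNat_ne_top, one_mul]

lemma tsum_expWeightedGammaTerm_le (hk : ∀ x y, x ≠ y → 0 ≤ k x y) (hμ_nonneg : ∀ x, 0 ≤ μ x)
    {f : X → ℝ} {C : ℝ} (hlip : LipBound k f C) (s : ℝ)
    (hsum : Summable fun x => Real.exp (s * f x) * μ x) :
    ∑' p, expWeightedGammaTerm k μ f s p ≤
      ENNReal.ofReal (C ^ 2 * s ^ 2 * ∑' x, Real.exp (s * f x) * μ x) := by
  have hrow : ∀ x, ∑' y, expWeightedGammaTerm k μ f s (x, y) ≤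
      ENNReal.ofReal (C ^ 2 * s ^ 2 * (Real.exp (s * f x) * μ x)) := fun x => by
    have hw : 0 ≤ s ^ 2 * Real.exp (s * f x) * μ x := by
      have := hμ_nonneg x
      positivity
    calc ∑' y, expWeightedGammaTerm k μ f s (x, y)
        = ENNReal.ofReal (s ^ 2 * Real.exp (s * f x) * μ x) *
            ENNReal.ofReal (gammaFn k f x) := by
          rw [ofReal_gammaFn hk (hlip.1 x), ← ENNReal.tsum_mul_left]
          rfl
      _ ≤ ENNReal.ofReal (s ^ 2 * Real.exp (s * f x) * μ x) * ENNReal.ofReal (C ^ 2) := by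
          gcongr
          exact hlip.2 x
      _ = ENNReal.ofReal (C ^ 2 * s ^ 2 * (Real.exp (s * f x) * μ x)) := by
          rw [← ENNReal.ofReal_mul hw]
          ring_nf
  calc ∑' p, expWeightedGammaTerm k μ f s p
      ≤ ∑' x, ENNReal.ofReal (C ^ 2 * s ^ 2 * (Real.exp (s * f x) * μ x)) := by
        rw [ENNReal.tsum_prod']
        exact ENNReal.tsum_le_tsum hrow
    _ = ENNReal.ofReal (C ^ 2 * s ^ 2 * ∑' x, Real.exp (s * f x) * μ x) := by
        rw [← ENNReal.ofReal_tsum_of_nonneg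
          (fun x => mul_nonneg (by positivity) (mul_nonneg (Real.exp_pos _).le (hμ_nonneg x)))
          (hsum.mul_left _), tsum_mul_left]

end MarkovSetting

theorem stmt_7 {X : Type*} (k : X → X → ℝ) (μ : X → ℝ)
    (hMS : MarkovSetting k μ)
    (f : X → ℝ) (hbdd : ∃ B : ℝ, ∀ x, |f x| ≤ B)
    (C : ℝ) (hlip : LipBound k f C) (s : ℝ) :
    fisherE k μ (fun x => Real.exp (s * f x)) ≤
      ENNReal.ofReal (C ^ 2 * s ^ 2 * ∑' x, Real.exp (s * f x) * μ x) := by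
  obtain ⟨hk, -, -, hμ_pos, hμ_one, hdb⟩ := hMS
  have hμ_nonneg : ∀ x, 0 ≤ μ x := fun x => (hμ_pos x).le
  have hμ : Summable μ := by
    by_contra h
    simp [tsum_eq_zero_of_not_summable h] at hμ_one
  calc fisherE k μ (fun x => Real.exp (s * f x))
      ≤ ∑' p, expWeightedGammaTerm k μ f s p := fisherE_exp_le_tsum hk hμ_nonneg hdb f s
    _ ≤ _ := tsum_expWeightedGammaTerm_le hk hμ_nonneg hlip s
        (summable_exp_mul_of_bounded hμ hμ_nonneg hbdd s)
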